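/- arXiv:2004.08351 — 2 statements merged into one kernel-verified Lean document; each statement's English description precedes it below -/
import Mathlib

section
/- Let $H : \mathbb{R}^\ell \times \mathbb{R}^m \to \mathbb{R}$, written $H(x,a)$, be differentiable in $a$, with $\partial_a H$ Lipschitz continuous in $(x,a)$ with constant $L$, and satisfying the strong convexity condition $H(x,a) - H(x,a') - (a-a')\cdot \partial_a H(x,a) \ge \gamma |a-a'|^2$ for all $x \in \mathbb{R}^\ell$ and $a,a' \in \mathbb{R}^m$, for some $\gamma>0$. Suppose $\Lambda : \mathbb{R}^\ell \to \mathbb{R}^m$ satisfies $\partial_a H(x, \Lambda(x)) = 0$ for every $x$. Then $|\Lambda(x) - \Lambda(x')| \le \frac{L}{2\gamma}|x - x'|$ for all $x, x' \in \mathbb{R}^\ell$. -/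
/-- Lipschitz continuity of the minimizer of a strongly convex Hamiltonian:
if `∂ₐH` is `L`-Lipschitz in `(x,a)`, `H(x,·)` is `γ`-strongly convex, and
`Λ x` is a critical point of `H(x,·)` for every `x`, then `Λ` is
`L/(2γ)`-Lipschitz. -/
theorem minimizer_lipschitz_of_strongly_convex {ℓ m : ℕ}
    (H : EuclideanSpace ℝ (Fin ℓ) → EuclideanSpace ℝ (Fin m) → ℝ)
    (DaH : EuclideanSpace ℝ (Fin ℓ) → EuclideanSpace ℝ (Fin m) → EuclideanSpace ℝ (Fin m))
    (hgrad : ∀ x a, HasGradientAt (H x) (DaH x a) a)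
    (L γ : ℝ) (hγ : 0 < γ)
    (hLip : ∀ x x' a a', ‖DaH x a - DaH x' a'‖ ≤ L * (‖x - x'‖ + ‖a - a'‖))
    (hsc : ∀ x a a', γ * ‖a - a'‖ ^ 2 ≤ H x a - H x a' - (inner ℝ (a - a') (DaH x a) : ℝ))
    (Λ : EuclideanSpace ℝ (Fin ℓ) → EuclideanSpace ℝ (Fin m))
    (hΛ : ∀ x, DaH x (Λ x) = 0) :
    ∀ x x', ‖Λ x - Λ x'‖ ≤ L / (2 * γ) * ‖x - x'‖ := by
  intro x x'
  by_cases hxx : x = x'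
  · subst hxx; simp
  have hx0 : (0:ℝ) < ‖x - x'‖ := by
    rw [norm_pos_iff]; exact sub_ne_zero.mpr hxx
  have hL : 0 ≤ L := by
    have h := hLip x x' (Λ x) (Λ x)
    simp only [sub_self, norm_zero, add_zero] at h
    have h0 : (0:ℝ) ≤ L * ‖x - x'‖ := le_trans (norm_nonneg _) h
    exact nonneg_of_mul_nonneg_right (by linarith [mul_comm L ‖x - x'‖]) hx0
  set a := Λ x
  set a' := Λ x'
  -- sum of two strong convexity inequalities
  have h1 := hsc x a a'
  have h2 := hsc x a' a
  have hnorm : ‖a' - a‖ = ‖a - a'‖ := by rw [← neg_sub, norm_neg]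
  rw [hΛ x] at h1
  simp only [inner_zero_right, sub_zero] at h1
  have hsum : 2 * γ * ‖a - a'‖ ^ 2 ≤ (inner ℝ (a - a') (DaH x a' - DaH x' a') : ℝ) := by
    have key : (inner ℝ (a' - a) (DaH x a') : ℝ) = - inner ℝ (a - a') (DaH x a') := by
      rw [← neg_sub a a', inner_neg_left]
    rw [hnorm, key] at h2
    have : 2 * γ * ‖a - a'‖ ^ 2 ≤ (inner ℝ (a - a') (DaH x a') : ℝ) := by
      nlinarith [h1, h2]
    calc 2 * γ * ‖a - a'‖ ^ 2 ≤ (inner ℝ (a - a') (DaH x a') : ℝ) := this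
      _ = (inner ℝ (a - a') (DaH x a' - DaH x' a') : ℝ) := by
          rw [hΛ x', sub_zero]
  have hcs : (inner ℝ (a - a') (DaH x a' - DaH x' a') : ℝ)
      ≤ ‖a - a'‖ * (L * ‖x - x'‖) := by
    calc (inner ℝ (a - a') (DaH x a' - DaH x' a') : ℝ)
        ≤ ‖a - a'‖ * ‖DaH x a' - DaH x' a'‖ := real_inner_le_norm _ _
      _ ≤ ‖a - a'‖ * (L * ‖x - x'‖) := by
          apply mul_le_mul_of_nonneg_left _ (norm_nonneg _)
          have h := hLip x x' a' a'
          simpa using h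
  have hmain : 2 * γ * ‖a - a'‖ ^ 2 ≤ ‖a - a'‖ * (L * ‖x - x'‖) := le_trans hsum hcs
  by_cases ha : ‖a - a'‖ = 0
  · rw [ha]
    positivity
  · have hapos : 0 < ‖a - a'‖ := lt_of_le_of_ne (norm_nonneg _) (Ne.symm ha)
    rw [div_mul_eq_mul_div, le_div_iff₀ (by positivity)]
    nlinarith [hmain]
end

section
/- Let $H : \mathbb{R}^\ell \times \mathbb{R}^m \to \mathbb{R}$ be differentiable in $a$ with strong convexity $H(x,a) - H(x,a') - (a-a')\cdot \partial_a H(x,a) \ge \gamma|a-a'|^2$ for some $\gamma>0$, and suppose $|\partial_a H(x,a)| \le C(1+|x|)$ whenever $a$ lies on the segment between $0$ and any minimizer. If $\alpha \in \mathbb{R}^m$ satisfies $\partial_a H(x,\alpha) = 0$ and $|\partial_a H(x, u\alpha)| \le C(1+|x|)$ for all $u \in [0,1]$, then $|\alpha| \le \frac{2C}{\gamma}(1+|x|)$. -/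
/-!
Adding the strong-convexity inequality at `(α, 0)` and at `(0, α)` cancels the values of `H`
and leaves `2γ‖α‖² ≤ ⟪α, ∂ₐH(x, 0) - ∂ₐH(x, α)⟫ = ⟪α, ∂ₐH(x, 0)⟫`, so Cauchy–Schwarz gives
`‖α‖ ≤ ‖∂ₐH(x, 0)‖ / (2γ)`, which is well within the claimed bound.
-/

open RealInnerProductSpace

section StrongMonotone

variable {E : Type*} [NormedAddCommGroup E] [InnerProductSpace ℝ E]

theorem strongMonotone_of_forall_sq_le_sub_sub_inner {f : E → ℝ} {g : E → E} {γ : ℝ}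
    (hsc : ∀ a a', γ * ‖a - a'‖ ^ 2 ≤ f a - f a' - ⟪a - a', g a⟫) (a a' : E) :
    2 * γ * ‖a - a'‖ ^ 2 ≤ ⟪a - a', g a' - g a⟫ := by
  have h := hsc a a'
  have h' := hsc a' a
  rw [← neg_sub a a', norm_neg, inner_neg_left] at h'
  rw [inner_sub_right]
  linarith

theorem two_mul_mul_norm_le_norm_of_strongMonotone {g : E → E} {γ : ℝ}
    (hsm : ∀ a a', 2 * γ * ‖a - a'‖ ^ 2 ≤ ⟪a - a', g a' - g a⟫) {α : E} (hα : g α = 0) :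
    2 * γ * ‖α‖ ≤ ‖g 0‖ := by
  rcases (norm_nonneg α).eq_or_lt with hzero | hpos
  · rw [← hzero, mul_zero]
    exact norm_nonneg _
  have h : 2 * γ * ‖α‖ ^ 2 ≤ ‖α‖ * ‖g 0‖ :=
    calc 2 * γ * ‖α‖ ^ 2 ≤ ⟪α, g 0⟫ := by simpa [hα] using hsm α 0
      _ ≤ ‖α‖ * ‖g 0‖ := real_inner_le_norm _ _
  nlinarith

end StrongMonotone

theorem minimizer_linear_growth_of_strongly_convex_general {ℓ m : ℕ}
    (H : EuclideanSpace ℝ (Fin ℓ) → EuclideanSpace ℝ (Fin m) → ℝ)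
    (DaH : EuclideanSpace ℝ (Fin ℓ) → EuclideanSpace ℝ (Fin m) → EuclideanSpace ℝ (Fin m))
    (γ C : ℝ) (hγ : 0 < γ)
    (hsc : ∀ x a a', γ * ‖a - a'‖ ^ 2 ≤ H x a - H x a' - (inner ℝ (a - a') (DaH x a) : ℝ))
    (x : EuclideanSpace ℝ (Fin ℓ)) (α : EuclideanSpace ℝ (Fin m))
    (hfoc : DaH x α = 0)
    (hgrowth : ∀ u : ℝ, u ∈ Set.Icc (0 : ℝ) 1 → ‖DaH x (u • α)‖ ≤ C * (1 + ‖x‖)) :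
    ‖α‖ ≤ 2 * C / γ * (1 + ‖x‖) := by
  have hbound : 2 * γ * ‖α‖ ≤ C * (1 + ‖x‖) :=
    calc 2 * γ * ‖α‖ ≤ ‖DaH x 0‖ := two_mul_mul_norm_le_norm_of_strongMonotone
          (strongMonotone_of_forall_sq_le_sub_sub_inner (hsc x)) hfoc
      _ ≤ C * (1 + ‖x‖) := by simpa using hgrowth 0 ⟨le_rfl, zero_le_one⟩
  have hC : 0 ≤ C * (1 + ‖x‖) := le_trans (by positivity) hbound
  rw [div_mul_eq_mul_div, le_div_iff₀ hγ]
  nlinarith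

/-- Linear growth of the minimizer of a strongly convex Hamiltonian:
if `H(x,·)` is `γ`-strongly convex, `α` is a critical point of `H(x,·)` and
`‖∂ₐH(x, uα)‖ ≤ C(1+‖x‖)` for `u ∈ [0,1]`, then `‖α‖ ≤ (2C/γ)(1+‖x‖)`. -/
theorem minimizer_linear_growth_of_strongly_convex {ℓ m : ℕ}
    (H : EuclideanSpace ℝ (Fin ℓ) → EuclideanSpace ℝ (Fin m) → ℝ)
    (DaH : EuclideanSpace ℝ (Fin ℓ) → EuclideanSpace ℝ (Fin m) → EuclideanSpace ℝ (Fin m))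
    (hgrad : ∀ x a, HasGradientAt (H x) (DaH x a) a)
    (γ C : ℝ) (hγ : 0 < γ)
    (hsc : ∀ x a a', γ * ‖a - a'‖ ^ 2 ≤ H x a - H x a' - (inner ℝ (a - a') (DaH x a) : ℝ))
    (x : EuclideanSpace ℝ (Fin ℓ)) (α : EuclideanSpace ℝ (Fin m))
    (hfoc : DaH x α = 0)
    (hgrowth : ∀ u : ℝ, u ∈ Set.Icc (0 : ℝ) 1 → ‖DaH x (u • α)‖ ≤ C * (1 + ‖x‖)) :
    ‖α‖ ≤ 2 * C / γ * (1 + ‖x‖) :=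
  minimizer_linear_growth_of_strongly_convex_general H DaH γ C hγ hsc x α hfoc hgrowth
end
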